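/- arXiv:1011.5382 — 5 statements merged into one kernel-verified Lean document; each statement's English description precedes it below -/
import Mathlib

section
/- Let p be an odd prime and let W be a weighing matrix of order n and weight k, where p divides k but p² does not divide k. Then n is even and the 𝔽_p-code generated by the rows of W has dimension exactly n/2; hence it is a self-dual code. -/
def IsWeighing (n k : ℕ) (W : Matrix (Fin n) (Fin n) ℤ) : Prop :=
  (∀ i j, W i j = 0 ∨ W i j = 1 ∨ W i j = -1) ∧ W * W.transpose = (k : ℤ) • 1

/-! Reducing `W * Wᵀ = k • 1` modulo `p` gives `M * Mᵀ = 0` for `M = W mod p`, so the column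
space of `Mᵀ` lies in the kernel of `M` and `rank M ≤ n - rank M`. Conversely, if `Mᵀ x = 0`, lift
`x` to `ℤ`: then `Wᵀ x = p y`, and applying `W` gives `(k / p) x = W y`; as `p ∤ k / p`, `x` is in
the column space of `M`, so `n - rank M ≤ rank M`. -/

open Matrix

namespace Matrix

variable {ι : Type*} [Fintype ι]

theorem two_mul_rank_eq_card_of_mul_transpose_eq_zero {K : Type*} [Field K] (M : Matrix ι ι K)
    (hM : M * Mᵀ = 0) (hker : LinearMap.ker Mᵀ.mulVecLin ≤ LinearMap.range M.mulVecLin) :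
    2 * M.rank = Fintype.card ι := by
  have hrange : LinearMap.range Mᵀ.mulVecLin ≤ LinearMap.ker M.mulVecLin := by
    rintro _ ⟨y, rfl⟩
    rw [LinearMap.mem_ker, mulVecLin_apply, mulVecLin_apply, mulVec_mulVec, hM, zero_mulVec]
  have h₁ := LinearMap.finrank_range_add_finrank_ker M.mulVecLin
  have h₂ := LinearMap.finrank_range_add_finrank_ker Mᵀ.mulVecLin
  have hle₁ := Submodule.finrank_mono hrange
  have hle₂ := Submodule.finrank_mono hker
  have ht := M.rank_transpose
  simp only [rank, Module.finrank_fintype_fun_eq_card] at *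
  omega

variable [DecidableEq ι]

theorem exists_mulVec_eq_smul_of_dvd_transpose_mulVec {W : Matrix ι ι ℤ} {p m : ℤ} (hp : p ≠ 0)
    (hW : W * Wᵀ = (p * m) • 1) {x : ι → ℤ} (hx : ∀ j, p ∣ (Wᵀ *ᵥ x) j) :
    ∃ y, W *ᵥ y = m • x := by
  choose y hy using hx
  have hWx : Wᵀ *ᵥ x = p • y := funext hy
  refine ⟨y, funext fun i => mul_left_cancel₀ hp ?_⟩
  calc p * (W *ᵥ y) i = (W *ᵥ (p • y)) i := by rw [mulVec_smul, Pi.smul_apply, smul_eq_mul]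
    _ = ((W * Wᵀ) *ᵥ x) i := by rw [← mulVec_mulVec, hWx]
    _ = p * (m • x) i := by
      rw [hW, smul_mulVec, one_mulVec, Pi.smul_apply, Pi.smul_apply, smul_eq_mul, smul_eq_mul,
        mul_assoc]

theorem ker_transpose_le_range_map_intCast {p : ℕ} [Fact p.Prime] {W : Matrix ι ι ℤ} {m : ℤ}
    (hW : W * Wᵀ = (p * m) • 1) (hm : ¬ (p : ℤ) ∣ m) :
    LinearMap.ker (W.map (Int.castRingHom (ZMod p)))ᵀ.mulVecLin ≤
      LinearMap.range (W.map (Int.castRingHom (ZMod p))).mulVecLin := by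
  set f := Int.castRingHom (ZMod p)
  intro x hx
  set x' : ι → ℤ := fun i => (x i).cast
  have hx' : f ∘ x' = x := funext fun i => ZMod.intCast_zmod_cast (x i)
  have hdvd : ∀ j, (p : ℤ) ∣ (Wᵀ *ᵥ x') j := fun j => by
    rw [← ZMod.intCast_zmod_eq_zero_iff_dvd]
    have := RingHom.map_mulVec f Wᵀ x' j
    rw [transpose_map, hx'] at this
    exact this.trans (congrFun hx j)
  obtain ⟨y, hy⟩ := exists_mulVec_eq_smul_of_dvd_transpose_mulVec
    (Int.natCast_ne_zero.mpr (Fact.out : p.Prime).ne_zero) hW hdvd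
  have hm' : (m : ZMod p) ≠ 0 := by rwa [Ne, ZMod.intCast_zmod_eq_zero_iff_dvd]
  have hMy : W.map f *ᵥ (f ∘ y) = (m : ZMod p) • x := funext fun i => by
    rw [← RingHom.map_mulVec, hy, ← hx']
    simp [f]
  refine ⟨(m : ZMod p)⁻¹ • (f ∘ y), ?_⟩
  rw [map_smul, mulVecLin_apply, hMy, smul_smul, inv_mul_cancel₀ hm', one_smul]

end Matrix

theorem stmt_2_general (n k : ℕ) (p : ℕ) [Fact p.Prime]
    (hpk : p ∣ k) (hp2k : ¬ p ^ 2 ∣ k)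
    (W : Matrix (Fin n) (Fin n) ℤ) (hW : IsWeighing n k W) :
    Even n ∧
      Module.finrank (ZMod p)
        (Submodule.span (ZMod p)
          (Set.range (fun i : Fin n => fun j : Fin n => ((W i j : ZMod p))))) = n / 2 := by
  obtain ⟨m, rfl⟩ := hpk
  have hm : ¬ (p : ℤ) ∣ m := by
    rw [Int.natCast_dvd_natCast]
    exact fun h => hp2k (pow_two p ▸ mul_dvd_mul_left p h)
  have hWW : W * Wᵀ = ((p : ℤ) * m) • 1 := by exact_mod_cast hW.2
  set M := W.map (Int.castRingHom (ZMod p))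
  have hMM : M * Mᵀ = 0 := by
    rw [← transpose_map, ← Matrix.map_mul, hWW]
    ext i j
    simp only [map_apply, Matrix.smul_apply, smul_eq_mul, Matrix.zero_apply, map_mul, map_natCast,
      ZMod.natCast_self, zero_mul]
  have hrank := M.two_mul_rank_eq_card_of_mul_transpose_eq_zero hMM
    (ker_transpose_le_range_map_intCast hWW hm)
  rw [Fintype.card_fin] at hrank
  refine ⟨⟨M.rank, by omega⟩, ?_⟩
  calc _ = M.rank := M.rank_eq_finrank_span_row.symm
    _ = n / 2 := by omega

theorem stmt_2 (n k : ℕ) (p : ℕ) [Fact p.Prime] (hodd : Odd p)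
    (hpk : p ∣ k) (hp2k : ¬ p ^ 2 ∣ k)
    (W : Matrix (Fin n) (Fin n) ℤ) (hW : IsWeighing n k W) :
    Even n ∧
      Module.finrank (ZMod p)
        (Submodule.span (ZMod p)
          (Set.range (fun i : Fin n => fun j : Fin n => ((W i j : ZMod p))))) = n / 2 :=
  stmt_2_general n k p hpk hp2k W hW
end

section
/- Let A₁ and A₂ be n×n circulant matrices with entries in {0,1,-1} satisfying A₁A₁ᵀ + A₂A₂ᵀ = k Iₙ. Then the 2n×2n block matrix W₁ = [[A₁, A₂], [-A₂ᵀ, A₁ᵀ]] is a weighing matrix of order 2n and weight k. -/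
def IsWeighingGen {m : Type*} [Fintype m] [DecidableEq m] (k : ℕ) (W : Matrix m m ℤ) : Prop :=
  (∀ i j, W i j = 0 ∨ W i j = 1 ∨ W i j = -1) ∧ W * W.transpose = (k : ℤ) • 1

/-!
The off-diagonal blocks of `W * Wᵀ` are `B * A - A * B` and `Aᵀ * Bᵀ - Bᵀ * Aᵀ`, and the lower
diagonal block is `Aᵀ * A + Bᵀ * B`. Circulant matrices commute with each other and with their
transposes (which are again circulant), so the off-diagonal blocks vanish and the lower diagonal
block equals the upper one, `A * Aᵀ + B * Bᵀ = k • 1`.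
-/

open Matrix

namespace Matrix

variable {n R : Type*}

theorem fromBlocks_skew_apply_mem {P : R → Prop} [Neg R] (hP : ∀ x, P x → P (-x))
    {A B : Matrix n n R} (hA : ∀ i j, P (A i j)) (hB : ∀ i j, P (B i j)) :
    ∀ i j, P (fromBlocks A B (-Bᵀ) Aᵀ i j)
  | .inl i, .inl j => hA i j
  | .inl i, .inr j => hB i j
  | .inr i, .inl j => hP _ (hB j i)
  | .inr i, .inr j => hA j i

theorem fromBlocks_skew_mul_transpose [Fintype n] [CommRing R] {A B : Matrix n n R}
    (hAB : Commute A B) (hA : Commute A Aᵀ) (hB : Commute B Bᵀ) :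
    fromBlocks A B (-Bᵀ) Aᵀ * (fromBlocks A B (-Bᵀ) Aᵀ)ᵀ
      = fromBlocks (A * Aᵀ + B * Bᵀ) 0 0 (A * Aᵀ + B * Bᵀ) := by
  have hBA : Bᵀ * Aᵀ = Aᵀ * Bᵀ := by rw [← transpose_mul, ← transpose_mul, hAB.eq]
  rw [fromBlocks_transpose, fromBlocks_multiply]
  simp only [transpose_transpose, transpose_neg, mul_neg, neg_mul, neg_neg, hAB.eq, hBA,
    neg_add_cancel, ← hA.eq, ← hB.eq, add_comm (B * Bᵀ)]

theorem Fin.commute_circulant_transpose {α : Type*} [CommSemiring α] {m : ℕ} (v : Fin m → α) :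
    Commute (circulant v) (circulant v)ᵀ := by
  rw [Fin.transpose_circulant]
  exact Fin.circulant_mul_comm _ _

end Matrix

theorem stmt_9 (n k : ℕ) (v₁ v₂ : Fin n → ℤ)
    (A₁ A₂ : Matrix (Fin n) (Fin n) ℤ)
    (hA₁ : A₁ = Matrix.circulant v₁) (hA₂ : A₂ = Matrix.circulant v₂)
    (he₁ : ∀ i j, A₁ i j = 0 ∨ A₁ i j = 1 ∨ A₁ i j = -1)
    (he₂ : ∀ i j, A₂ i j = 0 ∨ A₂ i j = 1 ∨ A₂ i j = -1)
    (hsum : A₁ * A₁.transpose + A₂ * A₂.transpose = (k : ℤ) • 1) :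
    IsWeighingGen k (Matrix.fromBlocks A₁ A₂ (-A₂.transpose) A₁.transpose) := by
  subst hA₁ hA₂
  refine ⟨fromBlocks_skew_apply_mem (P := fun x => x = 0 ∨ x = 1 ∨ x = -1)
    (fun _ => by rintro (h | h | h) <;> simp [h]) he₁ he₂, ?_⟩
  rw [fromBlocks_skew_mul_transpose (Fin.circulant_mul_comm v₁ v₂)
    (Fin.commute_circulant_transpose v₁) (Fin.commute_circulant_transpose v₂), hsum,
    ← fromBlocks_one, fromBlocks_smul, smul_zero]
end

section
/- Let A₁ and A₂ be n×n circulant matrices with entries in {0,1,-1} satisfying A₁A₁ᵀ + A₂A₂ᵀ = k Iₙ, and let R be the n×n back-diagonal permutation matrix (R_{ij} = 1 iff i + j - 1 = n, indices from 1). Then W₂ = [[A₁, A₂R], [-A₂R, A₁]] is a weighing matrix of order 2n and weight k. -/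
def backDiag (n : ℕ) : Matrix (Fin n) (Fin n) ℤ :=
  Matrix.of fun i j => if (i : ℕ) + (j : ℕ) + 1 = n then 1 else 0

/-! Put `B = A₂ R`. Since `R` reverses the columns of a circulant matrix, `B` is symmetric, so
`B Bᵀ = A₂ R Rᵀ A₂ᵀ = A₂ A₂ᵀ` and `R A₁ᵀ = (A₁ R)ᵀ = A₁ R`. Hence `A₁ Bᵀ = A₁ A₂ R` and
`B A₁ᵀ = A₂ A₁ R` agree because circulant matrices commute, which is exactly what makes the
off-diagonal blocks of `W₂ W₂ᵀ` vanish. -/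

open Matrix

section Weighing

variable {m : Type*} [Fintype m]

lemma fromBlocks_neg_mul_transpose {R : Type*} [CommRing R] (A B : Matrix m m R) :
    fromBlocks A B (-B) A * (fromBlocks A B (-B) A)ᵀ =
      fromBlocks (A * Aᵀ + B * Bᵀ) (B * Aᵀ - A * Bᵀ) (A * Bᵀ - B * Aᵀ) (A * Aᵀ + B * Bᵀ) := by
  rw [fromBlocks_transpose, fromBlocks_multiply, transpose_neg]
  congr 1 <;> noncomm_ring

lemma isWeighingGen_fromBlocks [DecidableEq m] {k : ℕ} {A B : Matrix m m ℤ}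
    (hA : ∀ i j, A i j = 0 ∨ A i j = 1 ∨ A i j = -1)
    (hB : ∀ i j, B i j = 0 ∨ B i j = 1 ∨ B i j = -1)
    (hAB : A * Bᵀ = B * Aᵀ) (hsum : A * Aᵀ + B * Bᵀ = (k : ℤ) • 1) :
    IsWeighingGen k (fromBlocks A B (-B) A) := by
  refine ⟨?_, ?_⟩
  · rintro (i | i) (j | j)
    · exact hA i j
    · exact hB i j
    · rcases hB i j with h | h | h <;> simp [h]
    · exact hA i j
  · rw [fromBlocks_neg_mul_transpose, hAB, sub_self, hsum, ← fromBlocks_one,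
      fromBlocks_smul, smul_zero]

end Weighing

section BackDiag

variable {n : ℕ}

lemma backDiag_apply (i j : Fin n) : backDiag n i j = if i = j.rev then 1 else 0 := by
  simp only [backDiag, of_apply, Fin.ext_iff, Fin.val_rev]
  congr 1
  simp only [eq_iff_iff]
  omega

@[simp]
lemma mul_backDiag_apply (A : Matrix (Fin n) (Fin n) ℤ) (i j : Fin n) :
    (A * backDiag n) i j = A i j.rev := by
  simp [mul_apply, backDiag_apply]

lemma backDiag_transpose : (backDiag n)ᵀ = backDiag n := by
  ext i j
  simp only [transpose_apply, backDiag, of_apply, Nat.add_comm (j : ℕ)]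

lemma backDiag_mul_self : backDiag n * backDiag n = 1 := by
  ext i j
  simp [backDiag_apply, one_apply]

lemma circulant_mul_backDiag_transpose (v : Fin n → ℤ) :
    (circulant v * backDiag n)ᵀ = circulant v * backDiag n := by
  ext i j
  simp only [transpose_apply, mul_backDiag_apply, circulant_apply]
  congr 1
  simp only [Fin.ext_iff, Fin.sub_def, Fin.val_rev]
  congr 1
  omega

lemma backDiag_mul_transpose_circulant (v : Fin n → ℤ) :
    backDiag n * (circulant v)ᵀ = circulant v * backDiag n := by
  rw [← circulant_mul_backDiag_transpose, transpose_mul, backDiag_transpose]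

end BackDiag

theorem stmt_10 (n k : ℕ) (v₁ v₂ : Fin n → ℤ)
    (A₁ A₂ : Matrix (Fin n) (Fin n) ℤ)
    (hA₁ : A₁ = Matrix.circulant v₁) (hA₂ : A₂ = Matrix.circulant v₂)
    (he₁ : ∀ i j, A₁ i j = 0 ∨ A₁ i j = 1 ∨ A₁ i j = -1)
    (he₂ : ∀ i j, A₂ i j = 0 ∨ A₂ i j = 1 ∨ A₂ i j = -1)
    (hsum : A₁ * A₁.transpose + A₂ * A₂.transpose = (k : ℤ) • 1) :
    IsWeighingGen k
      (Matrix.fromBlocks A₁ (A₂ * backDiag n) (-(A₂ * backDiag n)) A₁) := by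
  subst hA₁ hA₂
  refine isWeighingGen_fromBlocks he₁ (fun i j => by simpa using he₂ i j.rev) ?_ ?_
  · rw [circulant_mul_backDiag_transpose, Matrix.mul_assoc, backDiag_mul_transpose_circulant,
      ← Matrix.mul_assoc, ← Matrix.mul_assoc, Fin.circulant_mul_comm]
  · rw [transpose_mul, backDiag_transpose, Matrix.mul_assoc, ← Matrix.mul_assoc (backDiag n),
      backDiag_mul_self, Matrix.one_mul, hsum]
end

section
/- If W is a weighing matrix of order n and weight k with n odd, then (n - k)² + (n - k) + 1 ≥ n. -/
/-!
Each row and (since for `k ≠ 0`, `W Wᵀ = k I` forces `Wᵀ W = k I`) each column of `W` has `m = n - k` zeros.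
Two distinct rows are orthogonal, and for `n` odd a parity count shows that orthogonal rows must
share a zero column. Every ordered pair of distinct rows is therefore a pair of distinct zeros in
some column; there are `n (n - 1)` such row pairs and at most `n m (m - 1)` such zero pairs,
so `n ≤ m² - m + 1`.
-/

open Finset

theorem Matrix.transpose_mul_self_eq_smul_one {R ι : Type*} [CommRing R] [IsDomain R]
    [Fintype ι] [DecidableEq ι] {A : Matrix ι ι R} {c : R} (hc : c ≠ 0)
    (h : A * A.transpose = c • 1) : A.transpose * A = c • 1 := by
  have hdet : A.det ≠ 0 := by
    intro h0
    have := congrArg Matrix.det h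
    simp [Matrix.det_mul, h0] at this
    exact pow_ne_zero _ hc this.symm
  have hker : A * (A.transpose * A - c • 1) = 0 := by
    rw [Matrix.mul_sub, ← Matrix.mul_assoc, h]
    simp
  have hsmul : A.det • (A.transpose * A - c • 1) = 0 := by
    rw [← one_mul (A.transpose * A - c • 1), ← Matrix.smul_mul, ← Matrix.adjugate_mul,
      Matrix.mul_assoc, hker, Matrix.mul_zero]
  exact sub_eq_zero.mp ((smul_eq_zero.mp hsmul).resolve_left hdet)

section SignVectors

variable {ι : Type*} [Fintype ι] {f g : ι → ℤ}

theorem sum_mul_self_eq_card_filter_ne_zero (hf : ∀ j, f j = 0 ∨ f j = 1 ∨ f j = -1) :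
    ∑ j, f j * f j = #{j | f j ≠ 0} := by
  rw [card_filter]
  push_cast
  refine sum_congr rfl fun j _ => ?_
  rcases hf j with h | h | h <;> simp [h]

/-- Without a common zero, `f j ^ 2 + g j ^ 2 - f j * g j - 1` is even for every `j`; summing,
`2 ∑ f j ^ 2 - card ι` would be even. -/
theorem exists_common_zero_of_orthogonal (hι : Odd (Fintype.card ι))
    (hf : ∀ j, f j = 0 ∨ f j = 1 ∨ f j = -1) (hg : ∀ j, g j = 0 ∨ g j = 1 ∨ g j = -1)
    (hfg : ∑ j, f j * f j = ∑ j, g j * g j) (horth : ∑ j, f j * g j = 0) :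
    ∃ j, f j = 0 ∧ g j = 0 := by
  by_contra! hne
  have heven : ∀ j, Even (f j * f j + g j * g j - f j * g j - 1) := by
    intro j
    have := hne j
    rcases hf j with h | h | h <;> rcases hg j with h' | h' | h' <;> simp_all
  have hsum : ∑ j, (f j * f j + g j * g j - f j * g j - 1) =
      2 * ∑ j, f j * f j - Fintype.card ι := by
    simp only [sum_sub_distrib, sum_add_distrib, hfg, horth, sum_const, card_univ]
    simp [two_mul]
  have : Even (2 * ∑ j, f j * f j - Fintype.card ι) :=
    hsum ▸ even_sum _ fun j _ => heven j
  have hcard : Even (Fintype.card ι : ℤ) := by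
    simpa [Int.even_sub, even_two_mul] using this
  exact Nat.not_even_iff_odd.mpr hι (by exact_mod_cast hcard)

end SignVectors

theorem card_offDiag_le_sum_card_offDiag {ι κ : Type*} [Fintype ι] [Fintype κ] [DecidableEq ι]
    (Z : κ → Finset ι) (h : ∀ i i', i ≠ i' → ∃ c, i ∈ Z c ∧ i' ∈ Z c) :
    #(univ : Finset ι).offDiag ≤ ∑ c, #(Z c).offDiag := by
  classical
  refine (card_le_card fun p hp => ?_).trans card_biUnion_le
  obtain ⟨-, -, hne⟩ := mem_offDiag.mp hp
  obtain ⟨c, h₁, h₂⟩ := h p.1 p.2 hne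
  exact mem_biUnion.mpr ⟨c, mem_univ c, mem_offDiag.mpr ⟨h₁, h₂, hne⟩⟩

namespace IsWeighing

variable {n k : ℕ} {W : Matrix (Fin n) (Fin n) ℤ}

theorem transpose (hW : IsWeighing n k W) (hk : k ≠ 0) : IsWeighing n k W.transpose :=
  ⟨fun i j => hW.1 j i, by
    rw [Matrix.transpose_transpose]
    exact Matrix.transpose_mul_self_eq_smul_one (by exact_mod_cast hk) hW.2⟩

theorem sum_mul_row (hW : IsWeighing n k W) (i j : Fin n) :
    ∑ c, W i c * W j c = if i = j then (k : ℤ) else 0 := by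
  simpa [Matrix.mul_apply, Matrix.one_apply] using congrFun (congrFun hW.2 i) j

theorem card_filter_row_ne_zero (hW : IsWeighing n k W) (i : Fin n) :
    #{c | W i c ≠ 0} = k := by
  have := (sum_mul_self_eq_card_filter_ne_zero (hW.1 i)).symm.trans (hW.sum_mul_row i i)
  simpa using this

theorem weight_le (hW : IsWeighing n k W) (i : Fin n) : k ≤ n := by
  simpa [hW.card_filter_row_ne_zero i] using card_filter_le (univ : Finset (Fin n)) (W i · ≠ 0)

theorem card_filter_row_eq_zero (hW : IsWeighing n k W) (i : Fin n) :
    #{c | W i c = 0} = n - k := by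
  have := card_filter_add_card_filter_not (s := univ) (p := (W i · = 0))
  simp only [hW.card_filter_row_ne_zero i, card_univ, Fintype.card_fin] at this
  omega

theorem exists_common_zero (hW : IsWeighing n k W) (hn : Odd n) {i j : Fin n} (hij : i ≠ j) :
    ∃ c, W i c = 0 ∧ W j c = 0 :=
  exists_common_zero_of_orthogonal (by simpa using hn) (hW.1 i) (hW.1 j)
    (by rw [hW.sum_mul_row, hW.sum_mul_row]; simp) (by simpa [hij] using hW.sum_mul_row i j)

theorem sub_one_le (hW : IsWeighing n k W) (hn : Odd n) (hk : k ≠ 0) :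
    n - 1 ≤ (n - k) * (n - k) - (n - k) := by
  have hcount := card_offDiag_le_sum_card_offDiag (fun c => {i | W i c = 0})
    fun _ _ hij => by simpa using hW.exists_common_zero hn hij
  have hcol : ∀ c : Fin n, #{i | W i c = 0} = n - k :=
    (hW.transpose hk).card_filter_row_eq_zero
  simp only [offDiag_card, hcol, sum_const, card_univ, Fintype.card_fin, smul_eq_mul] at hcount
  rw [← Nat.mul_sub_one] at hcount
  exact Nat.le_of_mul_le_mul_left hcount hn.pos

end IsWeighing

theorem stmt_12 (n k : ℕ) (hn : Odd n)
    (W : Matrix (Fin n) (Fin n) ℤ) (hW : IsWeighing n k W) :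
    ((n : ℤ) - k) ^ 2 + ((n : ℤ) - k) + 1 ≥ n := by
  rcases Nat.eq_zero_or_pos k with rfl | hk
  · push_cast
    nlinarith
  have hbound := hW.sub_one_le hn hk.ne'
  have hkn := hW.weight_le ⟨0, hn.pos⟩
  have hm : n - k ≤ (n - k) * (n - k) := Nat.le_mul_self _
  zify [hkn, hm, hn.pos] at hbound
  nlinarith
end

section
/- If W is a weighing matrix of order n and weight k with n ≡ 2 (mod 4) and k < n, then k ≤ n - 1 and k is a sum of two integer squares. -/
/-!
Over `ℚ`, `W` gives a matrix `M` of order `n = 2 + 4m` with `M * Mᵀ = k • 1`. Writing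
`k = a² + b² + c² + d²`, the quaternion matrix of `a, b, c, d` is a `4 × 4` such matrix, and a
Witt cancellation (composing reflections so that four rows of `M` become its rows padded by
zeros) strips a `4 × 4` block off `M`. After `m` steps a rational `2 × 2` matrix remains, whose
first row writes `k = p² + q²` over `ℚ`; clearing denominators, the criterion that primes
`≡ 3 mod 4` occur to even powers then makes `k` a sum of two integer squares.
-/

open Matrix

section Reflection

variable {K : Type*} [Field K] {m : Type*} [Fintype m]

/-- When `w ⬝ᵥ w = 0` the junk division makes this the identity. -/
noncomputable def hyperplaneReflection (w x : m → K) : m → K :=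
  x - (2 * (x ⬝ᵥ w) / (w ⬝ᵥ w)) • w

theorem hyperplaneReflection_dotProduct (w x y : m → K) :
    hyperplaneReflection w x ⬝ᵥ hyperplaneReflection w y = x ⬝ᵥ y := by
  rcases eq_or_ne (w ⬝ᵥ w) 0 with hww | hww
  · simp [hyperplaneReflection, hww]
  simp only [hyperplaneReflection, sub_dotProduct, dotProduct_sub, smul_dotProduct,
    dotProduct_smul, smul_eq_mul, dotProduct_comm w y]
  field_simp
  ring

theorem hyperplaneReflection_of_dotProduct_eq_zero {w x : m → K} (h : x ⬝ᵥ w = 0) :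
    hyperplaneReflection w x = x := by
  simp [hyperplaneReflection, h]

variable [LinearOrder K] [IsStrictOrderedRing K]

theorem hyperplaneReflection_sub_self {v u : m → K} (h : v ⬝ᵥ v = u ⬝ᵥ u) :
    hyperplaneReflection (v - u) v = u := by
  rcases eq_or_ne v u with rfl | hvu
  · simp [hyperplaneReflection]
  have hw : (v - u) ⬝ᵥ (v - u) ≠ 0 := fun h0 =>
    hvu (sub_eq_zero.mp (dotProduct_self_eq_zero.mp h0))
  have hww : (v - u) ⬝ᵥ (v - u) = 2 * (v ⬝ᵥ (v - u)) := by
    simp only [dotProduct_sub, sub_dotProduct, dotProduct_comm u v]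
    linear_combination -h
  rw [hyperplaneReflection, ← hww, div_self hw, one_smul, sub_sub_cancel]

/-- Witt's extension theorem for the (anisotropic) standard form. -/
theorem exists_isometry_map_of_dotProduct_eq {ι : Type*} (v u : ι → m → K) (s : Finset ι)
    (h : ∀ i ∈ s, ∀ j ∈ s, v i ⬝ᵥ v j = u i ⬝ᵥ u j) :
    ∃ f : (m → K) → m → K, (∀ x y, f x ⬝ᵥ f y = x ⬝ᵥ y) ∧ ∀ i ∈ s, f (v i) = u i := by
  classical
  induction s using Finset.induction_on with
  | empty => exact ⟨id, fun _ _ => rfl, by simp⟩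
  | insert a s ha ih =>
    obtain ⟨f, hf, hfv⟩ := ih fun i hi j hj => h i (by simp [hi]) j (by simp [hj])
    refine ⟨fun x => hyperplaneReflection (f (v a) - u a) (f x),
      fun x y => by rw [hyperplaneReflection_dotProduct, hf], ?_⟩
    simp only [Finset.mem_insert, forall_eq_or_imp]
    refine ⟨hyperplaneReflection_sub_self (by rw [hf, h a (by simp) a (by simp)]), ?_⟩
    intro i hi
    rw [hfv i hi]
    apply hyperplaneReflection_of_dotProduct_eq_zero
    rw [dotProduct_sub, ← hfv i hi, hf, h i (by simp [hi]) a (by simp), hfv i hi, sub_self]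

end Reflection

theorem mul_transpose_eq_smul_one_iff {R ι : Type*} [CommSemiring R] [Fintype ι] [DecidableEq ι]
    {M : Matrix ι ι R} {k : R} :
    M * Mᵀ = k • 1 ↔ ∀ i j, M i ⬝ᵥ M j = if i = j then k else 0 := by
  simp only [← ext_iff, mul_apply', Matrix.smul_apply, one_apply, smul_eq_mul, mul_ite, mul_one,
    mul_zero]
  rfl

theorem eq_zero_of_mul_transpose_eq_smul_one_of_mulVec_eq_zero {K ι : Type*} [Field K]
    [Fintype ι] [DecidableEq ι] {P : Matrix ι ι K} {k : K} (hP : P * Pᵀ = k • 1) (hk : k ≠ 0)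
    {x : ι → K} (hx : P *ᵥ x = 0) : x = 0 := by
  have hdet : P.det * P.det = k ^ Fintype.card ι := by
    simpa [det_mul, det_transpose, det_smul] using congrArg det hP
  refine eq_zero_of_mulVec_eq_zero (fun h0 => ?_) hx
  exact pow_ne_zero _ hk (by rw [← hdet, h0, zero_mul])

theorem exists_mul_transpose_eq_smul_one_of_sum {K κ ι : Type*} [Field K] [LinearOrder K]
    [IsStrictOrderedRing K] [Fintype κ] [Fintype ι] [DecidableEq κ] [DecidableEq ι] {k : K}
    {P : Matrix κ κ K} (hP : P * Pᵀ = k • 1) {M : Matrix (κ ⊕ ι) (κ ⊕ ι) K}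
    (hM : M * Mᵀ = k • 1) : ∃ N : Matrix ι ι K, N * Nᵀ = k • 1 := by
  rcases eq_or_ne k 0 with rfl | hk
  · exact ⟨0, by simp⟩
  have hProw := mul_transpose_eq_smul_one_iff.mp hP
  have hMrow := mul_transpose_eq_smul_one_iff.mp hM
  let u : κ → κ ⊕ ι → K := fun i => Sum.elim (P i) 0
  have hu (i : κ) (y : κ ⊕ ι → K) : u i ⬝ᵥ y = P i ⬝ᵥ fun c => y (.inl c) := by
    simp [u, dotProduct, Fintype.sum_sum_type]
  -- An isometry `f` moves the first `|κ|` rows of `M` onto the rows of `P` padded by zeros.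
  obtain ⟨f, hf, hfu⟩ := exists_isometry_map_of_dotProduct_eq (fun i => M (.inl i)) u
    Finset.univ (by simp [u, hu, hMrow, hProw])
  let w (j : ι) : κ ⊕ ι → K := f (M (.inr j))
  have hw (j j' : ι) : w j ⬝ᵥ w j' = if j = j' then k else 0 := by simp [w, hf, hMrow]
  have hw_inl (j : ι) : (fun c => w j (.inl c)) = 0 := by
    refine eq_zero_of_mul_transpose_eq_smul_one_of_mulVec_eq_zero hP hk (funext fun i => ?_)
    rw [mulVec, ← hu, ← hfu i (Finset.mem_univ i), hf, hMrow]
    simp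
  refine ⟨of fun j c => w j (.inr c), mul_transpose_eq_smul_one_iff.mpr fun j j' => ?_⟩
  rw [← hw]
  simp [dotProduct, Fintype.sum_sum_type, congrFun (hw_inl _)]

/-- Its rows are `q, iq, jq, kq` for the quaternion `q = a + bi + cj + dk`. -/
def quaternionMatrix {R : Type*} [Ring R] (a b c d : R) : Matrix (Fin 4) (Fin 4) R :=
  !![a, b, c, d; -b, a, -d, c; -c, d, a, -b; -d, -c, b, a]

theorem quaternionMatrix_mul_transpose {R : Type*} [CommRing R] (a b c d : R) :
    quaternionMatrix a b c d * (quaternionMatrix a b c d)ᵀ =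
      (a ^ 2 + b ^ 2 + c ^ 2 + d ^ 2) • 1 := by
  ext i j
  fin_cases i <;> fin_cases j <;> simp [quaternionMatrix, mul_apply, Fin.sum_univ_four] <;> ring

theorem exists_mul_transpose_eq_smul_one_congr {K ι ι' : Type*} [CommSemiring K] [Fintype ι]
    [Fintype ι'] [DecidableEq ι] [DecidableEq ι'] {k : K} (e : ι ≃ ι')
    (h : ∃ M : Matrix ι' ι' K, M * Mᵀ = k • 1) : ∃ M : Matrix ι ι K, M * Mᵀ = k • 1 := by
  obtain ⟨M, hM⟩ := h
  refine ⟨M.submatrix e e, ?_⟩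
  rw [transpose_submatrix, submatrix_mul_equiv, hM, ← submatrix_one_equiv e]
  rfl

theorem exists_mul_transpose_eq_smul_one_of_add_four_mul {K : Type*} [Field K] [LinearOrder K]
    [IsStrictOrderedRing K] {k : K} (hk : ∃ a b c d : K, a ^ 2 + b ^ 2 + c ^ 2 + d ^ 2 = k)
    (r m : ℕ) (h : ∃ M : Matrix (Fin (r + 4 * m)) (Fin (r + 4 * m)) K, M * Mᵀ = k • 1) :
    ∃ M : Matrix (Fin r) (Fin r) K, M * Mᵀ = k • 1 := by
  obtain ⟨a, b, c, d, rfl⟩ := hk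
  induction m with
  | zero => simpa using h
  | succ m ih =>
    obtain ⟨M, hM⟩ := exists_mul_transpose_eq_smul_one_congr
      (finSumFinEquiv.trans (finCongr (by ring)) : Fin 4 ⊕ Fin (r + 4 * m) ≃ _) h
    exact ih (exists_mul_transpose_eq_smul_one_of_sum (quaternionMatrix_mul_transpose a b c d) hM)

theorem Nat.exists_sq_add_sq_of_mul_sq {k d x y : ℕ} (hd : d ≠ 0)
    (h : k * d ^ 2 = x ^ 2 + y ^ 2) : ∃ a b : ℕ, k = a ^ 2 + b ^ 2 := by
  rcases k.eq_zero_or_pos with rfl | hk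
  · exact ⟨0, 0, rfl⟩
  refine Nat.eq_sq_add_sq_iff.mpr fun q hq hq4 => ?_
  have : Fact q.Prime := ⟨Nat.prime_of_mem_primeFactors hq⟩
  have hkd := Nat.eq_sq_add_sq_iff.mp ⟨x, y, h⟩ q
    (Nat.primeFactors_mono (dvd_mul_right k _) (by positivity) hq) hq4
  rw [padicValNat.mul hk.ne' (pow_ne_zero 2 hd), padicValNat.pow] at hkd
  exact (Nat.even_add.mp hkd).mpr (even_two_mul _)

theorem Nat.exists_sq_add_sq_of_cast_eq_sq_add_sq {k : ℕ} {p q : ℚ}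
    (h : (k : ℚ) = p ^ 2 + q ^ 2) : ∃ a b : ℕ, k = a ^ 2 + b ^ 2 := by
  refine Nat.exists_sq_add_sq_of_mul_sq (d := p.den * q.den) (x := (p.num * q.den).natAbs)
    (y := (q.num * p.den).natAbs) (by positivity) ?_
  rw [← Nat.cast_inj (R := ℚ)]
  push_cast
  rw [Nat.cast_natAbs, Nat.cast_natAbs]
  simp only [Int.cast_abs, sq_abs, Int.cast_mul, Int.cast_natCast, ← Rat.mul_den_eq_num, h]
  ring

theorem stmt_13 (n k : ℕ) (hn : n % 4 = 2) (hk : k < n)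
    (W : Matrix (Fin n) (Fin n) ℤ) (hW : IsWeighing n k W) :
    k ≤ n - 1 ∧ ∃ a b : ℕ, k = a ^ 2 + b ^ 2 := by
  refine ⟨Nat.le_sub_one_of_lt hk, ?_⟩
  have hWq : W.map (Int.cast : ℤ → ℚ) * (W.map Int.cast)ᵀ = (k : ℚ) • 1 := by
    have h := congrArg (Int.castRingHom ℚ).mapMatrix hW.2
    rw [map_mul, map_zsmul, map_one, RingHom.mapMatrix_apply, RingHom.mapMatrix_apply] at h
    rwa [← transpose_map, Nat.cast_smul_eq_nsmul, ← natCast_zsmul]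
  obtain ⟨a, b, c, d, habcd⟩ := Nat.sum_four_squares k
  obtain ⟨m, rfl⟩ : ∃ m, n = 2 + 4 * m := ⟨n / 4, by omega⟩
  obtain ⟨M, hM⟩ := exists_mul_transpose_eq_smul_one_of_add_four_mul (k := (k : ℚ))
    ⟨a, b, c, d, by exact_mod_cast habcd⟩ 2 m ⟨_, hWq⟩
  have hM00 := mul_transpose_eq_smul_one_iff.mp hM 0 0
  simp only [dotProduct, Fin.sum_univ_two, if_pos] at hM00
  exact Nat.exists_sq_add_sq_of_cast_eq_sq_add_sq (p := M 0 0) (q := M 0 1)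
    (by rw [← hM00]; ring)
end
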